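/- Let X be a real Banach space, x₀ ∈ X, R > 0, and let A satisfy the variable Lipschitz condition on B[x₀,R] with a continuous nonnegative function k on [0,R]. Set a = ‖A x₀ − x₀‖ and a₋(r) = a − ∫₀^r k(t) dt. Then every fixed point x̄ of A in B[x₀,R] satisfies a₋(‖x̄ − x₀‖) ≤ ‖x̄ − x₀‖. Consequently, if a₋ has a fixed point in [0,R] and r_* denotes its smallest fixed point in [0,R], then every fixed point x̄ of A in B[x₀,R] satisfies ‖x̄ − x₀‖ ≥ r_*; i.e., A has no fixed point x with ‖x − x₀‖ < r_*. -/

import Mathlib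

/-!
Along the unit-speed segment `t ↦ x₀ + t • u` from `x₀` to `x`, the function
`t ↦ ‖A (x₀ + t • u) - A x₀‖` has right slopes at most `k t`, so a comparison argument bounds it
by `∫₀ᵗ k`. For a fixed point `x` the triangle inequality
`‖A x₀ - x₀‖ ≤ ‖A x₀ - A x‖ + ‖x - x₀‖` then gives `a₋(‖x - x₀‖) ≤ ‖x - x₀‖`. As `a₋ 0 = a ≥ 0`,
the intermediate value theorem yields a fixed point of `a₋` in `[0, ‖x - x₀‖]`, and the smallest
fixed point lies below it.
-/

open Set Filter Topology intervalIntegral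

section Primitive

variable {k f : ℝ → ℝ} {a b : ℝ}

theorem continuousOn_primitive_of_continuousOn (hk : ContinuousOn k (Icc a b)) (hab : a ≤ b) :
    ContinuousOn (fun u => ∫ t in a..u, k t) (Icc a b) := by
  rw [← uIcc_of_le hab] at hk ⊢
  exact continuousOn_primitive_interval hk.integrableOn_uIcc

theorem hasDerivWithinAt_primitive_Ici_of_continuousOn (hk : ContinuousOn k (Icc a b))
    {x : ℝ} (hx : x ∈ Ico a b) :
    HasDerivWithinAt (fun u => ∫ t in a..u, k t) (k x) (Ici x) x := by
  have hmem : Icc a b ∈ 𝓝[>] x := Icc_mem_nhdsGT_of_mem hx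
  refine integral_hasDerivWithinAt_right (t := Ioi x) ?_ ?_ ?_
  · exact (hk.mono (uIcc_of_le hx.1 ▸ Icc_subset_Icc_right hx.2.le)).intervalIntegrable
  · exact ⟨Icc a b, hmem, hk.aestronglyMeasurable measurableSet_Icc⟩
  · exact (hk x (Ico_subset_Icc_self hx)).mono_of_mem_nhdsWithin hmem

theorem continuousOn_of_abs_sub_le_mul (hk : ContinuousOn k (Icc a b))
    (hf : ∀ s t, a ≤ s → s ≤ t → t ≤ b → |f t - f s| ≤ k t * (t - s)) :
    ContinuousOn f (Icc a b) := by
  obtain ⟨M, hM⟩ := isCompact_Icc.exists_bound_of_continuousOn hk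
  have hlip : ∀ s ∈ Icc a b, ∀ t ∈ Icc a b, s ≤ t →
      dist (f t) (f s) ≤ M.toNNReal * dist t s := by
    intro s hs t ht hst
    rw [Real.dist_eq, Real.dist_eq, abs_of_nonneg (sub_nonneg.2 hst)]
    refine (hf s t hs.1 hst ht.2).trans (mul_le_mul_of_nonneg_right ?_ (sub_nonneg.2 hst))
    exact (le_abs_self _).trans ((hM t ht).trans (Real.le_coe_toNNReal M))
  refine (LipschitzOnWith.of_dist_le_mul (K := M.toNNReal) fun x hx y hy => ?_).continuousOn
  rcases le_total x y with hxy | hyx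
  · rw [dist_comm, dist_comm x]
    exact hlip x hx y hy hxy
  · exact hlip y hy x hx hyx

theorem sub_le_integral_of_abs_sub_le_mul (hab : a ≤ b) (hk : ContinuousOn k (Icc a b))
    (hf : ∀ s t, a ≤ s → s ≤ t → t ≤ b → |f t - f s| ≤ k t * (t - s)) :
    f b - f a ≤ ∫ t in a..b, k t := by
  have hslope : ∀ x ∈ Ico a b, ∀ r, k x < r → ∃ᶠ z in 𝓝[>] x, slope f x z < r := by
    intro x hx r hr
    have hk_right : ContinuousWithinAt k (Ioi x) x :=
      (hk x (Ico_subset_Icc_self hx)).mono_of_mem_nhdsWithin (Icc_mem_nhdsGT_of_mem hx)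
    refine Eventually.frequently ?_
    filter_upwards [hk_right.eventually_lt_const hr, Ioc_mem_nhdsGT hx.2] with z hkz hz
    have hzx : 0 < z - x := sub_pos.2 hz.1
    rw [slope_def_field, div_lt_iff₀ hzx]
    calc f z - f x ≤ |f z - f x| := le_abs_self _
      _ ≤ k z * (z - x) := hf x z hx.1 hz.1.le hz.2
      _ < r * (z - x) := mul_lt_mul_of_pos_right hkz hzx
  have hbound := image_le_of_liminf_slope_right_le_deriv_boundary
    (B := fun u => f a + ∫ t in a..u, k t)
    (continuousOn_of_abs_sub_le_mul hk hf) (by simp)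
    (continuousOn_const.add (continuousOn_primitive_of_continuousOn hk hab))
    (fun x hx => (hasDerivWithinAt_primitive_Ici_of_continuousOn hk hx).const_add (f a)) hslope
    (right_mem_Icc.2 hab)
  linarith

end Primitive

section VariableLipschitz

variable {X Y : Type*} [NormedAddCommGroup X] [NormedSpace ℝ X] [SeminormedAddCommGroup Y]

def VariableLipschitzOn (A : X → Y) (x₀ : X) (R : ℝ) (k : ℝ → ℝ) : Prop :=
  ∀ x₁ x₂ : X, ∀ r : ℝ, ‖x₁ - x₀‖ ≤ r → ‖x₂ - x₀‖ ≤ r → 0 < r → r ≤ R →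
    ‖A x₁ - A x₂‖ ≤ k r * ‖x₁ - x₂‖

variable {A : X → Y} {x₀ : X} {R : ℝ} {k : ℝ → ℝ}

theorem VariableLipschitzOn.norm_sub_le_integral (hA : VariableLipschitzOn A x₀ R k)
    (hk : ContinuousOn k (Icc 0 R)) {x : X} (hx : ‖x - x₀‖ ≤ R) :
    ‖A x - A x₀‖ ≤ ∫ t in (0 : ℝ)..‖x - x₀‖, k t := by
  rcases (norm_nonneg (x - x₀)).eq_or_lt with hρ | hρ
  · obtain rfl : x = x₀ := sub_eq_zero.1 (norm_eq_zero.1 hρ.symm)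
    simp
  set ρ := ‖x - x₀‖
  set u : X := ρ⁻¹ • (x - x₀)
  have hu : ‖u‖ = 1 := norm_smul_inv_norm (norm_pos_iff.1 hρ)
  have hdist : ∀ s t : ℝ, ‖(x₀ + t • u) - (x₀ + s • u)‖ = |t - s| := fun s t => by
    rw [add_sub_add_left_eq_sub, ← sub_smul, norm_smul, hu, mul_one, Real.norm_eq_abs]
  have hnorm : ∀ t : ℝ, ‖(x₀ + t • u) - x₀‖ = |t| := fun t => by
    rw [add_sub_cancel_left, norm_smul, hu, mul_one, Real.norm_eq_abs]
  have hend : x₀ + ρ • u = x := by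
    rw [smul_inv_smul₀ hρ.ne', add_sub_cancel]
  have hsegment := sub_le_integral_of_abs_sub_le_mul (f := fun t => ‖A (x₀ + t • u) - A x₀‖)
    hρ.le (hk.mono (Icc_subset_Icc_right hx)) fun s t hs hst htρ => by
      rcases hst.eq_or_lt with rfl | hst
      · simp
      have ht : 0 < t := hs.trans_lt hst
      have hLip := hA (x₀ + t • u) (x₀ + s • u) t ((hnorm t).trans_le (abs_of_pos ht).le)
        ((hnorm s).trans_le ((abs_of_nonneg hs).trans_le hst.le)) ht (htρ.trans hx)
      rw [hdist, abs_of_pos (sub_pos.2 hst)] at hLip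
      refine (abs_norm_sub_norm_le _ _).trans ?_
      rwa [sub_sub_sub_cancel_right]
  simpa only [hend, zero_smul, add_zero, sub_self, norm_zero, sub_zero] using hsegment

theorem sub_integral_le_norm_of_isFixedPt {A : X → X} (hA : VariableLipschitzOn A x₀ R k)
    (hk : ContinuousOn k (Icc 0 R)) {x : X} (hfix : A x = x) (hx : ‖x - x₀‖ ≤ R) :
    ‖A x₀ - x₀‖ - ∫ t in (0 : ℝ)..‖x - x₀‖, k t ≤ ‖x - x₀‖ := by
  have htri : ‖A x₀ - x₀‖ ≤ ‖A x - A x₀‖ + ‖x - x₀‖ := by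
    calc ‖A x₀ - x₀‖ ≤ ‖A x₀ - A x‖ + ‖A x - x₀‖ := norm_sub_le_norm_sub_add_norm_sub _ _ _
      _ = ‖A x - A x₀‖ + ‖x - x₀‖ := by rw [norm_sub_rev, hfix]
  linarith [hA.norm_sub_le_integral hk hx]

end VariableLipschitz

theorem majorization_no_fixed_point_below_general
    {X : Type*} [NormedAddCommGroup X] [NormedSpace ℝ X]
    (x₀ : X) (R : ℝ) (A : X → X) (k : ℝ → ℝ)
    (hk_cont : ContinuousOn k (Set.Icc 0 R))
    (hLip : ∀ x₁ x₂ : X, ∀ r : ℝ, ‖x₁ - x₀‖ ≤ r → ‖x₂ - x₀‖ ≤ r →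
      0 < r → r ≤ R → ‖A x₁ - A x₂‖ ≤ k r * ‖x₁ - x₂‖)
    (a : ℝ) (ha : a = ‖A x₀ - x₀‖)
    (aminus : ℝ → ℝ) (haminus : ∀ r : ℝ, aminus r = a - ∫ t in (0 : ℝ)..r, k t) :
    (∀ xbar : X, A xbar = xbar → ‖xbar - x₀‖ ≤ R →
      aminus ‖xbar - x₀‖ ≤ ‖xbar - x₀‖) ∧
    (∀ rlow : ℝ, rlow ∈ Set.Icc (0 : ℝ) R → aminus rlow = rlow →
      (∀ s ∈ Set.Icc (0 : ℝ) R, aminus s = s → rlow ≤ s) →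
      ∀ xbar : X, A xbar = xbar → ‖xbar - x₀‖ ≤ R → rlow ≤ ‖xbar - x₀‖) := by
  have hfixed : ∀ xbar : X, A xbar = xbar → ‖xbar - x₀‖ ≤ R →
      aminus ‖xbar - x₀‖ ≤ ‖xbar - x₀‖ := fun xbar hfix hxbar => by
    rw [haminus, ha]
    exact sub_integral_le_norm_of_isFixedPt hLip hk_cont hfix hxbar
  refine ⟨hfixed, fun rlow _ _ hmin xbar hfix hxbar => ?_⟩
  have haminus_cont : ContinuousOn aminus (Icc 0 ‖xbar - x₀‖) := by
    rw [funext haminus]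
    exact continuousOn_const.sub <|
      continuousOn_primitive_of_continuousOn (hk_cont.mono (Icc_subset_Icc_right hxbar))
        (norm_nonneg _)
  have haminus_zero : 0 ≤ aminus 0 := by
    rw [haminus, integral_same, sub_zero, ha]
    exact norm_nonneg _
  obtain ⟨s, hs, hs_fixed⟩ := exists_mem_Icc_isFixedPt haminus_cont (norm_nonneg _)
    haminus_zero (hfixed xbar hfix hxbar)
  exact (hmin s ⟨hs.1, hs.2.trans hxbar⟩ hs_fixed).trans hs.2

/-- Lower estimate for fixed points: every fixed point `x̄` of `A` in `B[x₀,R]`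
satisfies `a₋(‖x̄ - x₀‖) ≤ ‖x̄ - x₀‖`; consequently, if `r_*` is the smallest
fixed point of `a₋` in `[0,R]`, then `‖x̄ - x₀‖ ≥ r_*`. -/
theorem majorization_no_fixed_point_below
    {X : Type*} [NormedAddCommGroup X] [NormedSpace ℝ X] [CompleteSpace X]
    (x₀ : X) (R : ℝ) (hR : 0 < R) (A : X → X) (k : ℝ → ℝ)
    (hk_cont : ContinuousOn k (Set.Icc 0 R))
    (hk_nonneg : ∀ t ∈ Set.Icc (0 : ℝ) R, 0 ≤ k t)
    (hLip : ∀ x₁ x₂ : X, ∀ r : ℝ, ‖x₁ - x₀‖ ≤ r → ‖x₂ - x₀‖ ≤ r →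
      0 < r → r ≤ R → ‖A x₁ - A x₂‖ ≤ k r * ‖x₁ - x₂‖)
    (a : ℝ) (ha : a = ‖A x₀ - x₀‖)
    (aminus : ℝ → ℝ) (haminus : ∀ r : ℝ, aminus r = a - ∫ t in (0 : ℝ)..r, k t) :
    (∀ xbar : X, A xbar = xbar → ‖xbar - x₀‖ ≤ R →
      aminus ‖xbar - x₀‖ ≤ ‖xbar - x₀‖) ∧
    (∀ rlow : ℝ, rlow ∈ Set.Icc (0 : ℝ) R → aminus rlow = rlow →
      (∀ s ∈ Set.Icc (0 : ℝ) R, aminus s = s → rlow ≤ s) →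
      ∀ xbar : X, A xbar = xbar → ‖xbar - x₀‖ ≤ R → rlow ≤ ‖xbar - x₀‖) :=
  majorization_no_fixed_point_below_general x₀ R A k hk_cont hLip a ha aminus haminus
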